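/- Let X be a geodesic Gromov-hyperbolic metric space with basepoint z_0. For any bounded subset B of Isom(X) and for each β > 0, there exists N ≥ 1 such that the following holds: for any b_1, …, b_n ∈ B with n ≥ N, setting g_i := b_1⋯b_i and r_i := b_{i+1}⋯b_n, for every r ∈ [τ(g_n), d(z_0, g_n·z_0)] there exists an index i with |d(r_i g_i·z_0, z_0) − r| ≤ βn. -/

import Mathlib

open MeasureTheory ProbabilityTheory Filter Topology Pointwise

noncomputable section

namespace BMS

/-- The Gromov product `(y,z)_x := (d(y,x) + d(z,x) - d(y,z))/2`. -/
def gp {X : Type*} [MetricSpace X] (x y z : X) : ℝ :=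
  (dist y x + dist z x - dist y z) / 2

/-- `X` is `δ`-hyperbolic. -/
def HypWith (δ : ℝ) (X : Type*) [MetricSpace X] : Prop :=
  ∀ x₀ x₁ x₂ x₃ : X, min (gp x₀ x₃ x₁) (gp x₀ x₃ x₂) - δ ≤ gp x₀ x₁ x₂

/-- `X` is Gromov-hyperbolic. -/
def GromovHyperbolic (X : Type*) [MetricSpace X] : Prop :=
  ∃ δ : ℝ, 0 < δ ∧ HypWith δ X

/-- `X` is a geodesic metric space: any two points are joined by an isometrically
parametrized path. -/
def GeodesicSpace (X : Type*) [MetricSpace X] : Prop :=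
  ∀ x y : X, ∃ f : ℝ → X, f 0 = x ∧ f (dist x y) = y ∧
    ∀ s ∈ Set.Icc (0 : ℝ) (dist x y), ∀ t ∈ Set.Icc (0 : ℝ) (dist x y),
      dist (f s) (f t) = |s - t|

/-- The action of `Γ` on `X` is by isometries. -/
def IsIsomAction (Γ X : Type*) [Group Γ] [MetricSpace X] [MulAction Γ X] : Prop :=
  ∀ (g : Γ) (x y : X), dist (g • x) (g • y) = dist x y

/-- The positions of the random walk: `walk ω n = ω 1 * ⋯ * ω n`. -/
def walk {Γ Ω : Type*} [Group Γ] (ω : ℕ → Ω → Γ) : ℕ → Ω → Γ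
  | 0 => fun _ => 1
  | n + 1 => fun ρ => walk ω n ρ * ω (n + 1) ρ

/-- Extended-real valued logarithm of an extended nonnegative real, with `elog 0 = ⊥`. -/
def elog (x : ENNReal) : EReal :=
  if x = 0 then ⊥ else ((Real.log x.toReal : ℝ) : EReal)

/-- `(1/n)·log P(Z n ∈ R)`, as an extended real number. -/
def logProbRate {Ω : Type*} [MeasurableSpace Ω] (P : Measure Ω) (Z : ℕ → Ω → ℝ)
    (R : Set ℝ) (n : ℕ) : EReal :=
  (((n : ℝ)⁻¹ : ℝ) : EReal) * elog (P {ρ | Z n ρ ∈ R})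

/-- The sequence of real random variables `Z n` satisfies a (full) large deviation
principle under `P` with rate function `I`. -/
def HasLDP {Ω : Type*} [MeasurableSpace Ω] (P : Measure Ω) (Z : ℕ → Ω → ℝ)
    (I : ℝ → ENNReal) : Prop :=
  LowerSemicontinuous I ∧
  ∀ R : Set ℝ, MeasurableSet R →
    (-(⨅ α ∈ interior R, ((I α : EReal))) ≤ liminf (logProbRate P Z R) atTop ∧
      limsup (logProbRate P Z R) atTop ≤ -(⨅ α ∈ closure R, ((I α : EReal))))

/-- Weak large deviation principle: the lower bound holds for all measurable sets and
the upper bound for bounded measurable sets. -/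
def HasWeakLDP {Ω : Type*} [MeasurableSpace Ω] (P : Measure Ω) (Z : ℕ → Ω → ℝ)
    (I : ℝ → ENNReal) : Prop :=
  LowerSemicontinuous I ∧
  ∀ R : Set ℝ, MeasurableSet R →
    (-(⨅ α ∈ interior R, ((I α : EReal))) ≤ liminf (logProbRate P Z R) atTop ∧
      (Bornology.IsBounded R →
        limsup (logProbRate P Z R) atTop ≤ -(⨅ α ∈ closure R, ((I α : EReal)))))

/-- Convexity of an `[0,∞]`-valued function on `ℝ`. -/
def ConvexRate (I : ℝ → ENNReal) : Prop :=
  ∀ x y t : ℝ, 0 ≤ t → t ≤ 1 →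
    I (t * x + (1 - t) * y) ≤ ENNReal.ofReal t * I x + ENNReal.ofReal (1 - t) * I y

/-- A rate function is proper if its sublevel sets are compact. -/
def ProperRate (I : ℝ → ENNReal) : Prop :=
  ∀ c : ENNReal, c ≠ ⊤ → IsCompact {x : ℝ | I x ≤ c}

/-- The support of a measure on a countable discrete space. -/
def measSupport {Γ : Type*} [MeasurableSpace Γ] (μ : Measure Γ) : Set Γ :=
  {g | μ {g} ≠ 0}

/-- `S` is a Schottky set with respect to the basepoint `z0`. -/
def IsSchottky {Γ X : Type*} [Group Γ] [MetricSpace X] [MulAction Γ X]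
    (z0 : X) (S : Set Γ) : Prop :=
  S.Finite ∧ S.Nonempty ∧ ∃ C : ℝ, 0 < C ∧ ∀ y z : X,
    (2 / 3 : ℝ) * (S.ncard : ℝ) ≤ (({s ∈ S | gp z0 y (s • z) ≤ C} : Set Γ).ncard : ℝ)

/-- `u : ℤ → X` is a quasi-geodesic. -/
def QuasiGeodZ {X : Type*} [MetricSpace X] (u : ℤ → X) : Prop :=
  ∃ lam C : ℝ, 1 ≤ lam ∧ 0 ≤ C ∧ ∀ m n : ℤ,
    lam⁻¹ * |(m : ℝ) - (n : ℝ)| - C ≤ dist (u m) (u n) ∧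
      dist (u m) (u n) ≤ lam * |(m : ℝ) - (n : ℝ)| + C

/-- `g` is a loxodromic isometry: some (equivalently, any) orbit map `n ↦ g^n • x`
is a quasi-geodesic. -/
def IsLoxodromic (X : Type*) {Γ : Type*} [MetricSpace X] [Group Γ] [MulAction Γ X]
    (g : Γ) : Prop :=
  ∃ x : X, QuasiGeodZ (fun n : ℤ => (g ^ n) • x)

/-- The forward (`s = true`) or backward (`s = false`) orbit ray of `g` from `z0`. -/
def raySeq {Γ X : Type*} [Group Γ] [MetricSpace X] [MulAction Γ X]
    (z0 : X) (g : Γ) (s : Bool) : ℕ → X :=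
  fun n => (g ^ (if s then (n : ℤ) else -(n : ℤ))) • z0

/-- Two sequences define the same point of the Gromov boundary. -/
def SameEnd {X : Type*} [MetricSpace X] (z0 : X) (u v : ℕ → X) : Prop :=
  Tendsto (fun n => gp z0 (u n) (v n)) atTop atTop

/-- `g` and `h` are independent loxodromic elements: both are loxodromic and their
four boundary fixed points are pairwise distinct. -/
def IndepLox {Γ X : Type*} [Group Γ] [MetricSpace X] [MulAction Γ X]
    (z0 : X) (g h : Γ) : Prop :=
  IsLoxodromic X g ∧ IsLoxodromic X h ∧
  (¬ SameEnd z0 (raySeq z0 g true) (raySeq z0 g false)) ∧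
  (¬ SameEnd z0 (raySeq z0 h true) (raySeq z0 h false)) ∧
  (∀ s t : Bool, ¬ SameEnd z0 (raySeq z0 g s) (raySeq z0 h t))

/-- A set `B` of isometries is non-elementary: the subsemigroup it generates contains
two independent loxodromic elements. -/
def NonElementarySet {Γ X : Type*} [Group Γ] [MetricSpace X] [MulAction Γ X]
    (z0 : X) (B : Set Γ) : Prop :=
  ∃ g h : Γ, g ∈ Subsemigroup.closure B ∧ h ∈ Subsemigroup.closure B ∧ IndepLox z0 g h

/-- A probability measure is non-elementary if its support is. -/
def NonElementary {Γ X : Type*} [Group Γ] [MeasurableSpace Γ] [MetricSpace X] [MulAction Γ X]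
    (z0 : X) (μ : Measure Γ) : Prop :=
  NonElementarySet z0 (measSupport μ)

/-- The translation length `τ(g) := inf_x d(x, g•x)`. -/
def translationLength (X : Type*) {Γ : Type*} [MetricSpace X] [Group Γ] [MulAction Γ X]
    (g : Γ) : ℝ :=
  ⨅ x : X, dist x (g • x)

/-- The asymptotic (stable) translation length `ℓ(g) = lim_n d(g^n • z0, z0)/n`;
by Fekete's subadditivity lemma the limit equals the infimum over `n ≥ 1`. -/
def stableLength {Γ X : Type*} [Group Γ] [MetricSpace X] [MulAction Γ X]
    (z0 : X) (g : Γ) : ℝ :=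
  ⨅ n : ℕ, dist ((g ^ (n + 1)) • z0) z0 / (n + 1)

/-- `B` is non-arithmetic: some power `B^n` contains two elements with different
asymptotic translation lengths. -/
def NonArithmetic {Γ X : Type*} [Group Γ] [MetricSpace X] [MulAction Γ X]
    (z0 : X) (B : Set Γ) : Prop :=
  ∃ (n : ℕ) (g₁ g₂ : Γ), g₁ ∈ B ^ n ∧ g₂ ∈ B ^ n ∧
    stableLength z0 g₁ ≠ stableLength z0 g₂

/-- `sup_{g ∈ B^n} d(g•z0, z0)`, valued in `[0,∞]`. -/
def dispSup {Γ X : Type*} [Group Γ] [MetricSpace X] [MulAction Γ X]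
    (z0 : X) (B : Set Γ) (n : ℕ) : ENNReal :=
  ⨆ g ∈ B ^ n, ENNReal.ofReal (dist (g • z0) z0)

/-- `inf_{g ∈ B^n} d(g•z0, z0)`, valued in `[0,∞]`. -/
def dispInf {Γ X : Type*} [Group Γ] [MetricSpace X] [MulAction Γ X]
    (z0 : X) (B : Set Γ) (n : ℕ) : ENNReal :=
  ⨅ g ∈ B ^ n, ENNReal.ofReal (dist (g • z0) z0)

/-- `μ` has a finite exponential moment:
`E[exp (λ·d(z0, ω 1 • z0))] < ∞` for some `λ > 0`. -/
def FiniteExpMoment {Γ Ω X : Type*} [Group Γ] [MetricSpace X] [MulAction Γ X]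
    [MeasurableSpace Ω] (P : Measure Ω) (ω : ℕ → Ω → Γ) (z0 : X) : Prop :=
  ∃ lam : ℝ, 0 < lam ∧
    Integrable (fun ρ => Real.exp (lam * dist ((ω 1 ρ) • z0) z0)) P

/-- The increments `ω i` are i.i.d. with common law `μ`. -/
def IIDWalk {Γ Ω : Type*} [Group Γ] [MeasurableSpace Γ] [MeasurableSpace Ω]
    (P : Measure Ω) (ω : ℕ → Ω → Γ) (μ : Measure Γ) : Prop :=
  (∀ i, Measurable (ω i)) ∧
  iIndepFun ω P ∧
  ∀ i, P.map (ω i) = μ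

/-- `-(1/n)·log P(d(z_n, z0) ≤ a·n)`. -/
def belowRate {Γ Ω X : Type*} [Group Γ] [MetricSpace X] [MulAction Γ X]
    [MeasurableSpace Ω] (P : Measure Ω) (ω : ℕ → Ω → Γ) (z0 : X) (a : ℝ) (n : ℕ) : EReal :=
  -((((n : ℝ)⁻¹ : ℝ) : EReal) * elog (P {ρ | dist ((walk ω n ρ) • z0) z0 ≤ a * n}))

/-- `-(1/n)·log P(d(z_n, z0) ≥ a·n)`. -/
def aboveRate {Γ Ω X : Type*} [Group Γ] [MetricSpace X] [MulAction Γ X]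
    [MeasurableSpace Ω] (P : Measure Ω) (ω : ℕ → Ω → Γ) (z0 : X) (a : ℝ) (n : ℕ) : EReal :=
  -((((n : ℝ)⁻¹ : ℝ) : EReal) * elog (P {ρ | a * n ≤ dist ((walk ω n ρ) • z0) z0}))

end BMS
namespace BMS

/-- `prodFrom b j m = b (j+1) * ⋯ * b (j+m)`. -/
def prodFrom {Γ : Type*} [Group Γ] (b : ℕ → Γ) (j : ℕ) : ℕ → Γ
  | 0 => 1
  | k + 1 => prodFrom b j k * b (j + k + 1)

/-!
Put `g = b₁ ⋯ bₙ` and `xᵢ = b₁ ⋯ bᵢ • z₀`. Conjugating by `b₁ ⋯ bᵢ` turns `d(rᵢ gᵢ z₀, z₀)` into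
the displacement `d(g xᵢ, xᵢ)`, which equals `d(z₀, g z₀)` at `i = 0` and changes by at most
`2M` per step. A midpoint `m` of `z₀` and `g z₀` is moved by at most `τ(g) + 8δ`, and by
hyperbolicity the chain `x₀, …, xₙ` passes within `δ log₂ n + M` of `m`. So the displacement
along the chain runs from `d(z₀, g z₀)` down to `τ(g) + O(δ log n + M)`, and a discrete
intermediate value argument hits every `r` in between up to `O(log n) ≤ βn`.
-/

lemma GeodesicSpace.exists_midpoint {X : Type*} [MetricSpace X] (hgeo : GeodesicSpace X)
    (x y : X) : ∃ m, dist x m = dist x y / 2 ∧ dist m y = dist x y / 2 := by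
  obtain ⟨f, hf₀, hf₁, hf⟩ := hgeo x y
  have hd := dist_nonneg (x := x) (y := y)
  have hmid : dist x y / 2 ∈ Set.Icc 0 (dist x y) := ⟨by linarith, by linarith⟩
  refine ⟨f (dist x y / 2), ?_, ?_⟩
  · have h := hf 0 (Set.left_mem_Icc.mpr hd) _ hmid
    rwa [hf₀, zero_sub, abs_neg, abs_of_nonneg hmid.1] at h
  · have h := hf _ hmid _ (Set.right_mem_Icc.mpr hd)
    rw [hf₁, abs_sub_comm, abs_of_nonneg (by linarith)] at h
    linarith

lemma exists_le_abs_sub_le_max {F : ℕ → ℝ} {r E C : ℝ} {m : ℕ} (h₀ : r ≤ F 0)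
    (hm : F m ≤ r + E) (hstep : ∀ j < m, |F (j + 1) - F j| ≤ C) :
    ∃ i ≤ m, |F i - r| ≤ max E C := by
  induction m generalizing F with
  | zero =>
    exact ⟨0, le_rfl, (abs_of_nonneg (by linarith)).trans_le (le_max_of_le_left (by linarith))⟩
  | succ m ih =>
    by_cases h₁ : r ≤ F 1
    · obtain ⟨i, him, hi⟩ :=
        ih (F := fun i => F (i + 1)) h₁ hm fun j hj => hstep (j + 1) (by omega)
      exact ⟨i + 1, by omega, hi⟩
    · have h01 := (abs_sub_comm _ _).trans_le (hstep 0 m.succ_pos)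
      refine ⟨0, m.succ.zero_le, (abs_of_nonneg (by linarith)).trans_le (le_max_of_le_right ?_)⟩
      linarith [le_abs_self (F 0 - F 1)]

lemma eventually_add_mul_clog_le (A : ℝ) {B β : ℝ} (hB : 0 ≤ B) (hβ : 0 < β) :
    ∀ᶠ n : ℕ in atTop, A + B * Nat.clog 2 n ≤ β * n := by
  have hlog :
      (fun n : ℕ => A + B + B / Real.log 2 * Real.log n) =o[atTop] (fun n : ℕ => (n : ℝ)) :=
    ((Asymptotics.isLittleO_const_id_atTop (A + B)).add
      (Real.isLittleO_log_id_atTop.const_mul_left (B / Real.log 2))).comp_tendsto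
      tendsto_natCast_atTop_atTop
  filter_upwards [hlog.bound hβ, eventually_ge_atTop 1] with n hn hn₁
  have hclog : (Nat.clog 2 n : ℝ) ≤ Real.log n / Real.log 2 + 1 := by
    rw [← Real.natCeil_logb_natCast, ← Real.log_div_log]
    exact (Nat.ceil_lt_add_one (Real.logb_nonneg one_lt_two (by exact_mod_cast hn₁))).le
  rw [Real.norm_eq_abs, Real.norm_of_nonneg n.cast_nonneg] at hn
  calc A + B * Nat.clog 2 n ≤ A + B + B / Real.log 2 * Real.log n := by
        have h := mul_le_mul_of_nonneg_left hclog hB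
        rw [show B * (Real.log n / Real.log 2 + 1) = B + B / Real.log 2 * Real.log n by ring] at h
        linarith
    _ ≤ β * n := (le_abs_self _).trans hn

section

variable {X : Type*} [MetricSpace X] {Γ : Type*} [Group Γ] [MulAction Γ X] {δ : ℝ}

lemma prodFrom_mul_prodFrom (b : ℕ → Γ) (j k : ℕ) :
    ∀ m, prodFrom b j k * prodFrom b (j + k) m = prodFrom b j (k + m)
  | 0 => mul_one _
  | m + 1 => by
    rw [prodFrom.eq_2, ← add_assoc, prodFrom.eq_2, ← mul_assoc, prodFrom_mul_prodFrom b j k m,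
      ← add_assoc]

lemma gp_comm (p x y : X) : gp p x y = gp p y x := by
  unfold gp
  rw [dist_comm x y]
  ring

lemma dist_sub_dist_le_gp (p x y : X) : dist p x - dist x y ≤ gp p x y := by
  unfold gp
  linarith [dist_triangle x y p, dist_comm p x]

lemma HypWith.sub_le_gp (hh : HypWith δ X) {p x y w : X} {t : ℝ}
    (hx : t ≤ gp p w x) (hy : t ≤ gp p w y) : t - δ ≤ gp p x y :=
  (sub_le_sub_right (le_min hx hy) δ).trans (hh p x y w)

/-- Bisect the chain and apply the four-point condition once per level. -/
lemma HypWith.exists_dist_le_gp_add (hh : HypWith δ X) {M : ℝ} (hM : 0 ≤ M) {x : ℕ → X}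
    (p : X) (k : ℕ) {a b : ℕ} (hab : a ≤ b) (hk : b - a ≤ 2 ^ k)
    (hx : ∀ i, a ≤ i → i < b → dist (x i) (x (i + 1)) ≤ M) :
    ∃ i, a ≤ i ∧ i ≤ b ∧ dist p (x i) ≤ gp p (x a) (x b) + δ * k + M := by
  induction k generalizing a b with
  | zero =>
    have hend : dist (x a) (x b) ≤ M := by
      rcases (by omega : b = a ∨ b = a + 1) with rfl | rfl
      · simpa using hM
      · exact hx a le_rfl (by omega)
    refine ⟨a, le_rfl, hab, ?_⟩
    rw [Nat.cast_zero, mul_zero, add_zero]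
    linarith [dist_sub_dist_le_gp p (x a) (x b)]
  | succ k ih =>
    rw [pow_succ] at hk
    set c := (a + b) / 2
    obtain hc | hc := min_le_iff.mp (sub_le_iff_le_add.mp (hh p (x a) (x b) (x c)))
    · obtain ⟨i, hai, hic, hi⟩ :=
        ih (b := c) (by omega) (by omega) fun i hai hib => hx i hai (by omega)
      refine ⟨i, hai, by omega, ?_⟩
      rw [gp_comm] at hc
      push_cast
      linarith
    · obtain ⟨i, hci, hib, hi⟩ :=
        ih (a := c) (by omega) (by omega) fun i hci hib => hx i (by omega) hib
      refine ⟨i, by omega, hib, ?_⟩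
      push_cast
      linarith

lemma translationLength_nonneg (g : Γ) : 0 ≤ translationLength X g :=
  Real.iInf_nonneg fun _ => dist_nonneg

namespace IsIsomAction

variable (hiso : IsIsomAction Γ X)
include hiso

lemma abs_dist_smul_sub_dist_smul_le (g : Γ) (x y : X) :
    |dist (g • y) y - dist (g • x) x| ≤ 2 * dist x y := by
  have hxy := hiso g x y
  rw [abs_le]
  constructor <;>
    linarith [dist_triangle4 (g • x) (g • y) y x, dist_triangle4 (g • y) (g • x) x y,
      dist_comm (g • x) (g • y), dist_comm x y]

lemma dist_mul_smul_eq (u v : Γ) (z : X) :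
    dist ((v * u) • z) z = dist ((u * v) • u • z) (u • z) := by
  rw [← hiso u, ← mul_smul, ← mul_smul, mul_assoc]

lemma dist_prodFrom_smul_succ (b : ℕ → Γ) (j k : ℕ) (z : X) :
    dist (prodFrom b j k • z) (prodFrom b j (k + 1) • z) = dist (b (j + k + 1) • z) z := by
  rw [prodFrom.eq_2, mul_smul, hiso, dist_comm]

lemma dist_smul_smul_le (hh : HypWith δ X) (hδ : 0 ≤ δ) (g : Γ) (z y : X) :
    dist z (g • g • z) ≤ dist z (g • z) + dist y (g • y) + 4 * δ := by
  -- each Gromov product at `g z` below is `≥ (d(z, g z) - d(y, g y)) / 2` by a triangle inequality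
  obtain ⟨s, hs⟩ : ∃ s, s = (dist z (g • z) - dist y (g • y)) / 2 := ⟨_, rfl⟩
  have hgy : dist (g • y) (g • z) = dist y z := hiso g y z
  have hggz : dist (g • g • z) (g • z) = dist z (g • z) := by rw [hiso, dist_comm]
  have hgyggz : dist (g • y) (g • g • z) = dist y (g • z) := hiso g y (g • z)
  have h₁ : s ≤ gp (g • z) y (g • y) := by
    unfold gp
    linarith [dist_triangle z y (g • z), dist_comm z y, dist_comm y (g • z)]
  have h₂ : s ≤ gp (g • z) y z := by
    unfold gp
    linarith [dist_triangle (g • y) y (g • z), dist_comm (g • y) y, dist_comm z (g • z)]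
  have h₃ : s - δ ≤ gp (g • z) (g • y) (g • g • z) := by
    unfold gp
    linarith [dist_triangle y (g • y) (g • z), dist_comm z (g • z), dist_comm y z]
  have h₄ := hh.sub_le_gp (hh.sub_le_gp h₁ h₂) h₃
  unfold gp at h₄
  linarith [dist_comm (g • g • z) z]

lemma dist_smul_smul_le_translationLength (hh : HypWith δ X) (hδ : 0 ≤ δ) (g : Γ) (z : X) :
    dist z (g • g • z) ≤ dist z (g • z) + translationLength X g + 4 * δ := by
  have : Nonempty X := ⟨z⟩
  have key : dist z (g • g • z) - dist z (g • z) - 4 * δ ≤ translationLength X g :=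
    le_ciInf fun y => by linarith [hiso.dist_smul_smul_le hh hδ g z y]
  linarith

/-- `g m` is a midpoint of `g z` and `g² z`, and `d(z, g² z) ≤ d(z, g z) + τ(g) + 4δ`; the
four-point condition at `g z` then forces `m` and `g m` to be close. -/
lemma dist_smul_le_of_midpoint (hh : HypWith δ X) (hδ : 0 ≤ δ) {g : Γ} {z m : X}
    (hzm : dist z m = dist z (g • z) / 2) (hmg : dist m (g • z) = dist z (g • z) / 2) :
    dist m (g • m) ≤ translationLength X g + 8 * δ := by
  set D := dist z (g • z)
  obtain ⟨t, ht⟩ : ∃ t, t = (D - translationLength X g - 4 * δ) / 2 := ⟨_, rfl⟩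
  have hτ := translationLength_nonneg (X := X) g
  have hgm : dist (g • m) (g • z) = D / 2 := by rw [hiso, dist_comm, hzm]
  have hggz : dist (g • g • z) (g • z) = D := by rw [hiso, dist_comm]
  have hggm : dist (g • g • z) (g • m) = D / 2 := by rw [hiso, dist_comm, hmg]
  have h₁ : t ≤ gp (g • z) (g • g • z) z := by
    unfold gp
    linarith [hiso.dist_smul_smul_le_translationLength hh hδ g z, dist_comm (g • g • z) z]
  have h₂ : t ≤ gp (g • z) (g • g • z) (g • m) := by
    unfold gp
    linarith
  have h₃ : t - δ ≤ gp (g • z) z m := by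
    unfold gp
    linarith [dist_comm m (g • z), dist_comm z (g • z)]
  have h₄ := hh.sub_le_gp h₃ (hh.sub_le_gp h₁ h₂)
  unfold gp at h₄
  linarith [dist_comm m (g • z)]

lemma exists_abs_dist_smul_sub_le (hgeo : GeodesicSpace X) (hh : HypWith δ X) (hδ : 0 ≤ δ)
    {M : ℝ} (hM : 0 ≤ M) {g : Γ} {n : ℕ} {x : ℕ → X}
    (hx : ∀ i < n, dist (x i) (x (i + 1)) ≤ M) {z : X} (hx₀ : x 0 = z) (hxn : x n = g • z)
    {r : ℝ} (hr₁ : translationLength X g ≤ r) (hr₂ : r ≤ dist z (g • z)) :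
    ∃ i ≤ n, |dist (g • x i) (x i) - r| ≤ 8 * δ + 2 * δ * Nat.clog 2 n + 2 * M := by
  subst hx₀
  obtain ⟨m, hm₁, hm₂⟩ := hgeo.exists_midpoint (x 0) (g • x 0)
  have hgp : gp m (x 0) (x n) = 0 := by
    unfold gp
    rw [hxn, dist_comm (x 0) m, dist_comm (g • x 0) m] at *
    linarith
  obtain ⟨i₀, -, hi₀, hm⟩ := hh.exists_dist_le_gp_add hM m (Nat.clog 2 n) n.zero_le
    (by simpa using Nat.le_pow_clog one_lt_two n) fun i _ hi => hx i hi
  have hFi₀ : dist (g • x i₀) (x i₀) ≤ r + (8 * δ + 2 * δ * Nat.clog 2 n + 2 * M) := by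
    have hmove := hiso.dist_smul_le_of_midpoint hh hδ hm₁ hm₂
    linarith [le_abs_self (dist (g • x i₀) (x i₀) - dist (g • m) m),
      hiso.abs_dist_smul_sub_dist_smul_le g m (x i₀), dist_comm m (g • m)]
  obtain ⟨i, hi, hclose⟩ := exists_le_abs_sub_le_max (F := fun i => dist (g • x i) (x i))
    (C := 2 * M) (by rwa [dist_comm]) hFi₀ fun j hj =>
      (hiso.abs_dist_smul_sub_dist_smul_le g _ _).trans (by linarith [hx j (by omega)])
  exact ⟨i, hi.trans hi₀, hclose.trans (max_le le_rfl (le_add_of_nonneg_left (by positivity)))⟩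

end IsIsomAction

end

/-- **Proposition (finding displacements among cyclic permutations).** For any bounded
subset `B` of isometries of a geodesic Gromov-hyperbolic space and each `β > 0` there
exists `N ≥ 1` such that for all `n ≥ N` and `b_1, …, b_n ∈ B`, setting
`g_i = b_1⋯b_i` and `r_i = b_{i+1}⋯b_n`, for every `r ∈ [τ(g_n), d(z0, g_n•z0)]` there
is an index `i` with `|d(r_i g_i • z0, z0) - r| ≤ βn`. -/
theorem cyclic_permutation_displacement
    {X : Type*} [MetricSpace X] {Γ : Type*} [Group Γ] [MulAction Γ X]
    (hiso : IsIsomAction Γ X) (hgeo : GeodesicSpace X) (hhyp : GromovHyperbolic X)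
    (z0 : X) (B : Set Γ)
    (hbdd : ∃ M : ℝ, ∀ g ∈ B, dist (g • z0) z0 ≤ M) :
    ∀ β : ℝ, 0 < β → ∃ N : ℕ, 1 ≤ N ∧
      ∀ n : ℕ, N ≤ n → ∀ b : ℕ → Γ, (∀ i : ℕ, 1 ≤ i → i ≤ n → b i ∈ B) →
        ∀ r : ℝ, translationLength X (prodFrom b 0 n) ≤ r →
          r ≤ dist z0 ((prodFrom b 0 n) • z0) →
          ∃ i : ℕ, i ≤ n ∧
            |dist ((prodFrom b i (n - i) * prodFrom b 0 i) • z0) z0 - r| ≤ β * n := by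
  obtain ⟨M, hM⟩ := hbdd
  obtain ⟨δ, hδ, hh⟩ := hhyp
  intro β hβ
  obtain ⟨N, hN⟩ := eventually_atTop.mp
    (eventually_add_mul_clog_le (8 * δ + 2 * max M 0) (by positivity : 0 ≤ 2 * δ) hβ)
  refine ⟨max N 1, le_max_right N 1, fun n hn b hb r hr₁ hr₂ => ?_⟩
  have hstep : ∀ i < n, dist (prodFrom b 0 i • z0) (prodFrom b 0 (i + 1) • z0) ≤ max M 0 :=
    fun i hi => (hiso.dist_prodFrom_smul_succ b 0 i z0).trans_le <|
      (hM _ (hb _ (by omega) (by omega))).trans (le_max_left M 0)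
  obtain ⟨i, hi, hclose⟩ := hiso.exists_abs_dist_smul_sub_le hgeo hh hδ.le (le_max_right M 0)
    hstep (one_smul Γ z0) rfl hr₁ hr₂
  have hsplit := prodFrom_mul_prodFrom b 0 i (n - i)
  rw [Nat.zero_add, Nat.add_sub_cancel' hi] at hsplit
  refine ⟨i, hi, ?_⟩
  rw [hiso.dist_mul_smul_eq, hsplit]
  linarith [hN n (le_of_max_le_left hn)]

end BMS
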